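/- arXiv:1107.2676 — 5 statements merged into one kernel-verified Lean document; each statement's English description precedes it below -/
import Mathlib

section
/- Let R be a regular ring of prime characteristic p that is F-finite and such that the Frobenius makes R a flat (hence faithfully flat) R-module, and let (J_i)_{i∈S} be a family of ideals of R. Then (⋂_i J_i)^{[p^e]} = ⋂_i J_i^{[p^e]}. Consequently, for any ideal b of R there is a unique smallest ideal J with b ⊆ J^{[p^e]}. -/
/-!
`J^{[p^e]}` is the extension of `J` along the `e`-th iterate `F^e` of Frobenius, which is flat and
finite; over a Noetherian ring it is therefore finitely presented, hence projective. For a free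
module `Rⁿ`, `I • Rⁿ` consists of the vectors with all coordinates in `I`, so `I ↦ I • Rⁿ` commutes
with arbitrary intersections, and this passes to direct summands of `Rⁿ`. The root `b^{[1/p^e]}`
is then the intersection of all `J` with `b ⊆ J^{[p^e]}`.
-/

/-- The Frobenius power `I^{[p^e]}` of an ideal: the ideal generated by the
`p^e`-th powers of the elements of `I`. -/
def frobeniusPower {R : Type*} [CommRing R] (p e : ℕ) (I : Ideal R) : Ideal R :=
  Ideal.span ((fun x : R => x ^ p ^ e) '' (I : Set R))

universe u

open Submodule

theorem existsUnique_isLeast_of_map_iInf {α : Type u} {β : Type*} [CompleteLattice α]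
    [CompleteLattice β] (F : α → β)
    (hF : ∀ {ι : Type u} (f : ι → α), F (⨅ i, f i) = ⨅ i, F (f i)) (b : β) :
    ∃! a, IsLeast {a | b ≤ F a} a := by
  let S := {a // b ≤ F a}
  have hmem : b ≤ F (⨅ a : S, a.1) := by
    rw [hF]
    exact le_iInf fun a => a.2
  have hleast : IsLeast {a | b ≤ F a} (⨅ a : S, a.1) :=
    ⟨hmem, fun a ha => iInf_le (fun a : S => a.1) ⟨a, ha⟩⟩
  exact ⟨_, hleast, fun _ ha => ha.unique hleast⟩

section SmulTop

variable {R M N : Type*} [CommRing R] [AddCommGroup M] [Module R M] [AddCommGroup N] [Module R N]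

theorem Ideal.mem_smul_top_pi_iff {κ : Type*} [Finite κ] (I : Ideal R) (x : κ → R) :
    x ∈ I • (⊤ : Submodule R (κ → R)) ↔ ∀ k, x k ∈ I := by
  classical
  have := Fintype.ofFinite κ
  refine ⟨fun hx k => ?_, fun hx => ?_⟩
  · refine smul_induction_on (p := fun y => y k ∈ I) hx (fun r hr m _ => ?_)
      (fun _ _ => I.add_mem)
    simpa using I.mul_mem_right (m k) hr
  · rw [pi_eq_sum_univ x]
    exact Submodule.sum_mem _ fun k _ => smul_mem_smul (hx k) mem_top

theorem Ideal.iInf_smul_top_pi {ι κ : Type*} [Finite κ] (I : ι → Ideal R) :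
    (⨅ i, I i) • (⊤ : Submodule R (κ → R)) = ⨅ i, I i • (⊤ : Submodule R (κ → R)) := by
  ext x
  simp only [Ideal.mem_smul_top_pi_iff, Submodule.mem_iInf]
  exact forall_comm

theorem Submodule.map_smul_top_le (I : Ideal R) (f : M →ₗ[R] N) :
    (I • ⊤ : Submodule R M).map f ≤ I • ⊤ := by
  rw [map_smul'']
  exact smul_mono_right I le_top

theorem Submodule.comap_smul_top_of_leftInverse (I : Ideal R) {f : N →ₗ[R] M} {g : M →ₗ[R] N}
    (hfg : f ∘ₗ g = .id) : (I • ⊤ : Submodule R N).comap g = I • ⊤ := by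
  refine le_antisymm (fun x hx => ?_) (map_le_iff_le_comap.mp (map_smul_top_le I g))
  have hx' : f (g x) ∈ (I • ⊤ : Submodule R N).map f := mem_map_of_mem hx
  rw [← LinearMap.comp_apply, hfg, LinearMap.id_apply] at hx'
  exact map_smul_top_le I f hx'

theorem Ideal.iInf_smul_top_of_projective [Module.Finite R M] [Module.Projective R M]
    {ι : Type*} (I : ι → Ideal R) :
    (⨅ i, I i) • (⊤ : Submodule R M) = ⨅ i, I i • (⊤ : Submodule R M) := by
  obtain ⟨n, f, g, -, -, hfg⟩ := Module.Finite.exists_comp_eq_id_of_projective R M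
  calc (⨅ i, I i) • ⊤ = ((⨅ i, I i) • ⊤ : Submodule R (Fin n → R)).comap g :=
        (comap_smul_top_of_leftInverse _ hfg).symm
    _ = ⨅ i, (I i • ⊤ : Submodule R (Fin n → R)).comap g := by
        rw [Ideal.iInf_smul_top_pi, Submodule.comap_iInf]
    _ = ⨅ i, I i • ⊤ := by simp_rw [comap_smul_top_of_leftInverse _ hfg]

end SmulTop

theorem Ideal.map_algebraMap_iInf {R S : Type*} [CommRing R] [CommRing S] [Algebra R S]
    [Module.Finite R S] [Module.Projective R S] {ι : Type*} (I : ι → Ideal R) :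
    (⨅ i, I i).map (algebraMap R S) = ⨅ i, (I i).map (algebraMap R S) := by
  have h := Ideal.iInf_smul_top_of_projective (M := S) I
  simp_rw [Ideal.smul_top_eq_map] at h
  ext x
  simpa only [restrictScalars_mem, Submodule.mem_iInf, Ideal.mem_iInf] using SetLike.ext_iff.mp h x

theorem Ideal.map_iInf_of_flat_of_finite {R S : Type*} [CommRing R] [CommRing S]
    [IsNoetherianRing R] {φ : R →+* S} (hflat : φ.Flat) (hfin : φ.Finite) {ι : Type*}
    (I : ι → Ideal R) : (⨅ i, I i).map φ = ⨅ i, (I i).map φ := by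
  algebraize [φ]
  have : Module.FinitePresentation R S := Module.finitePresentation_of_finite R S
  have : Module.Projective R S := Module.Flat.projective_of_finitePresentation
  exact Ideal.map_algebraMap_iInf I

theorem RingHom.Flat.pow {R : Type*} [CommRing R] {f : R →+* R} (hf : f.Flat) (n : ℕ) :
    (f ^ n).Flat := by
  induction n with
  | zero => exact RingHom.Flat.id R
  | succ n ih => rw [pow_succ]; exact hf.comp ih

theorem RingHom.Finite.pow {R : Type*} [CommRing R] {f : R →+* R} (hf : f.Finite) (n : ℕ) :
    (f ^ n).Finite := by
  induction n with
  | zero => exact RingHom.Finite.id R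
  | succ n ih => rw [pow_succ]; exact ih.comp hf

theorem frobeniusPower_eq_map {R : Type*} [CommRing R] (p e : ℕ) [ExpChar R p] (I : Ideal R) :
    frobeniusPower p e I = I.map (frobenius R p ^ e) := by
  rw [← iterateFrobenius_eq_pow]
  rfl

theorem frobeniusPower_iInf {R : Type*} [CommRing R] (p : ℕ) [ExpChar R p] [IsNoetherianRing R]
    (hFlat : (frobenius R p).Flat) (hFfin : (frobenius R p).Finite) (e : ℕ) {ι : Type*}
    (J : ι → Ideal R) : frobeniusPower p e (⨅ i, J i) = ⨅ i, frobeniusPower p e (J i) := by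
  simp_rw [frobeniusPower_eq_map]
  exact Ideal.map_iInf_of_flat_of_finite (hFlat.pow e) (hFfin.pow e) J

theorem frobeniusPower_iInf_and_exists_smallest_root_general {R : Type*} [CommRing R]
    (p : ℕ) [ExpChar R p]
    [IsNoetherianRing R] (hFlat : (frobenius R p).Flat)
    (hFfin : (frobenius R p).Finite) (e : ℕ) :
    (∀ {ι : Type} (J : ι → Ideal R),
        frobeniusPower p e (⨅ i, J i) = ⨅ i, frobeniusPower p e (J i)) ∧
      ∀ b : Ideal R, ∃! J : Ideal R,
        b ≤ frobeniusPower p e J ∧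
          ∀ J' : Ideal R, b ≤ frobeniusPower p e J' → J ≤ J' :=
  ⟨frobeniusPower_iInf p hFlat hFfin e,
    existsUnique_isLeast_of_map_iInf _ (frobeniusPower_iInf p hFlat hFfin e)⟩

/-- If `R` is a Noetherian (e.g. regular) ring of prime characteristic `p`, `F`-finite and
with flat Frobenius, then Frobenius powers commute with arbitrary intersections of ideals:
`(⋂ᵢ Jᵢ)^{[p^e]} = ⋂ᵢ Jᵢ^{[p^e]}`. Consequently, for every ideal `b` there is a unique
smallest ideal `J` with `b ⊆ J^{[p^e]}` (denoted `b^{[1/p^e]}`). -/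
theorem frobeniusPower_iInf_and_exists_smallest_root {R : Type*} [CommRing R]
    (p : ℕ) [Fact p.Prime] [CharP R p] [ExpChar R p]
    [IsNoetherianRing R] (hFlat : (frobenius R p).Flat)
    (hFfin : (frobenius R p).Finite) (e : ℕ) :
    (∀ {ι : Type} (J : ι → Ideal R),
        frobeniusPower p e (⨅ i, J i) = ⨅ i, frobeniusPower p e (J i)) ∧
      ∀ b : Ideal R, ∃! J : Ideal R,
        b ≤ frobeniusPower p e J ∧
          ∀ J' : Ideal R, b ≤ frobeniusPower p e J' → J ≤ J' :=
  frobeniusPower_iInf_and_exists_smallest_root_general p hFlat hFfin e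
end

section
/- Let R be a ring of prime characteristic p such that Frobenius is flat, let a ⊆ m be ideals with m = m_P maximal, and define ν(e) to be the largest i with a^i ⊄ m^{[p^e]}. Then ν(e+1) ≥ p·ν(e) for all e ≥ 1. -/
section

variable {R : Type*} [CommRing R] (p : ℕ) [ExpChar R p]

theorem PrimeSpectrum.comap_frobenius (P : PrimeSpectrum R) :
    PrimeSpectrum.comap (frobenius R p) P = P := by
  ext x
  exact P.isPrime.pow_mem_iff_mem p (expChar_pos R p)

theorem RingHom.Flat.faithfullyFlat_frobenius (hflat : (frobenius R p).Flat) :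
    (frobenius R p).FaithfullyFlat :=
  RingHom.FaithfullyFlat.iff_flat_and_comap_surjective.mpr
    ⟨hflat, fun P => ⟨P, PrimeSpectrum.comap_frobenius p P⟩⟩

theorem RingHom.FaithfullyFlat.comap_map_eq_self {S : Type*} [CommRing S] {f : R →+* S}
    (hf : f.FaithfullyFlat) (I : Ideal R) : (I.map f).comap f = I := by
  algebraize [f]
  exact Ideal.comap_map_eq_self_of_faithfullyFlat I

theorem frobeniusPower_succ (e : ℕ) (I : Ideal R) :
    frobeniusPower p (e + 1) I = (frobeniusPower p e I).map (frobenius R p) := by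
  rw [frobeniusPower, frobeniusPower, Ideal.map_span, ← Set.image_comp]
  congr 2
  ext x
  simp [frobenius_def, ← pow_mul, pow_succ]

theorem pow_notMem_frobeniusPower_succ (hflat : (frobenius R p).Flat) {e : ℕ} {I : Ideal R}
    {x : R} (hx : x ∉ frobeniusPower p e I) : x ^ p ∉ frobeniusPower p (e + 1) I := by
  rwa [frobeniusPower_succ, ← frobenius_def, ← Ideal.mem_comap,
    hflat.faithfullyFlat_frobenius.comap_map_eq_self]

theorem Ideal.pow_not_le_frobeniusPower_succ (hflat : (frobenius R p).Flat) {a I : Ideal R}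
    {n e : ℕ} (h : ¬ a ^ n ≤ frobeniusPower p e I) :
    ¬ a ^ (p * n) ≤ frobeniusPower p (e + 1) I := by
  obtain ⟨x, hxa, hxI⟩ := SetLike.not_le_iff_exists.mp h
  refine SetLike.not_le_iff_exists.mpr ⟨x ^ p, ?_, pow_notMem_frobeniusPower_succ p hflat hxI⟩
  rw [mul_comm, pow_mul]
  exact Ideal.pow_mem_pow hxa p

end

theorem nu_succ_ge_p_mul_nu_general {R : Type*} [CommRing R] (p : ℕ)
    [ExpChar R p] (hflat : (frobenius R p).Flat)
    (a m : Ideal R) (ν : ℕ → ℕ)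
    (hν : ∀ e, 1 ≤ e → IsGreatest {i : ℕ | ¬ a ^ i ≤ frobeniusPower p e m} (ν e)) :
    ∀ e, 1 ≤ e → p * ν e ≤ ν (e + 1) := fun e he =>
  (hν (e + 1) (by omega)).2 <| a.pow_not_le_frobeniusPower_succ p hflat (hν e he).1

/-- Let `R` have prime characteristic `p` with flat Frobenius, `a ⊆ m` ideals with `m`
maximal, and `ν e` the largest `i` with `aⁱ ⊄ m^{[pᵉ]}`. Then `ν (e+1) ≥ p · ν e` for
all `e ≥ 1`. -/
theorem nu_succ_ge_p_mul_nu {R : Type*} [CommRing R] (p : ℕ) [Fact p.Prime]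
    [CharP R p] [ExpChar R p] (hflat : (frobenius R p).Flat)
    (a m : Ideal R) (ham : a ≤ m) (hmax : m.IsMaximal) (ν : ℕ → ℕ)
    (hν : ∀ e, 1 ≤ e → IsGreatest {i : ℕ | ¬ a ^ i ≤ frobeniusPower p e m} (ν e)) :
    ∀ e, 1 ≤ e → p * ν e ≤ ν (e + 1) :=
  nu_succ_ge_p_mul_nu_general p hflat a m ν hν
end

section
/- Let a, b ⊆ m be nonzero ideals of a ring of prime characteristic p with flat Frobenius, m maximal. If a^r ⊆ m^{[p^e]} and b^s ⊆ m^{[p^e]}, then (a+b)^{r+s} ⊆ m^{[p^e]}. Consequently ν_{a+b}(e) ≤ ν_a(e) + ν_b(e) + 1 for every e ≥ 1, and hence fpt_P(a+b) ≤ fpt_P(a) + fpt_P(b). -/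
open Filter

/-! By the binomial expansion `(a + b)^{r+s} ⊆ a^r + b^s`, so `(a + b)^{r+s} ⊆ m^{[pᵉ]}` as soon
as `a^r` and `b^s` are; taking `r = ν_a(e) + 1` and `s = ν_b(e) + 1` gives
`ν_{a+b}(e) ≤ ν_a(e) + ν_b(e) + 1`. Dividing by `pᵉ`, the extra `1 / pᵉ` vanishes in the limit. -/

namespace Ideal

variable {R : Type*} [CommSemiring R]

theorem sup_pow_add_le_of_pow_le {a b I : Ideal R} {r s : ℕ} (har : a ^ r ≤ I)
    (hbs : b ^ s ≤ I) : (a ⊔ b) ^ (r + s) ≤ I :=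
  sup_pow_add_le_pow_sup_pow.trans (sup_le har hbs)

theorem pow_succ_le_of_isGreatest {a I : Ideal R} {ν : ℕ}
    (hν : IsGreatest {i : ℕ | ¬ a ^ i ≤ I} ν) : a ^ (ν + 1) ≤ I := by
  by_contra h
  exact ν.not_succ_le_self (hν.2 h)

theorem le_add_add_one_of_isGreatest {a b I : Ideal R} {νa νb νab : ℕ}
    (hνa : IsGreatest {i : ℕ | ¬ a ^ i ≤ I} νa) (hνb : IsGreatest {i : ℕ | ¬ b ^ i ≤ I} νb)
    (hνab : IsGreatest {i : ℕ | ¬ (a ⊔ b) ^ i ≤ I} νab) : νab ≤ νa + νb + 1 := by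
  by_contra! h
  have hle : (a ⊔ b) ^ (νa + 1 + (νb + 1)) ≤ I :=
    sup_pow_add_le_of_pow_le (pow_succ_le_of_isGreatest hνa) (pow_succ_le_of_isGreatest hνb)
  exact hνab.1 ((pow_le_pow_right (by omega)).trans hle)

end Ideal

theorem le_add_of_tendsto_div_pow {q : ℝ} (hq : 1 < q) {x y z : ℕ → ℝ} {X Y Z c : ℝ}
    (hx : Tendsto (fun e => x e / q ^ e) atTop (nhds X))
    (hy : Tendsto (fun e => y e / q ^ e) atTop (nhds Y))
    (hz : Tendsto (fun e => z e / q ^ e) atTop (nhds Z))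
    (hle : ∀ᶠ e in atTop, x e ≤ y e + z e + c) : X ≤ Y + Z := by
  have hc : Tendsto (fun e : ℕ => c / q ^ e) atTop (nhds 0) :=
    tendsto_const_nhds.div_atTop (tendsto_pow_atTop_atTop_of_one_lt hq)
  have hsum := (hy.add hz).add hc
  rw [add_zero] at hsum
  refine le_of_tendsto_of_tendsto hx hsum ?_
  filter_upwards [hle] with e he
  rw [← add_div, ← add_div]
  exact div_le_div_of_nonneg_right he (by positivity)

theorem fpt_sum_le_add_fpt_general {R : Type*} [CommRing R] (p : ℕ) [Fact p.Prime]
    (a b m : Ideal R) (νa νb νab : ℕ → ℕ)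
    (hνa : ∀ e, 1 ≤ e → IsGreatest {i : ℕ | ¬ a ^ i ≤ frobeniusPower p e m} (νa e))
    (hνb : ∀ e, 1 ≤ e → IsGreatest {i : ℕ | ¬ b ^ i ≤ frobeniusPower p e m} (νb e))
    (hνab : ∀ e, 1 ≤ e →
      IsGreatest {i : ℕ | ¬ (a ⊔ b) ^ i ≤ frobeniusPower p e m} (νab e))
    (fptA fptB fptAB : ℝ)
    (hA : Tendsto (fun e : ℕ => (νa e : ℝ) / (p : ℝ) ^ e) atTop (nhds fptA))
    (hB : Tendsto (fun e : ℕ => (νb e : ℝ) / (p : ℝ) ^ e) atTop (nhds fptB))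
    (hAB : Tendsto (fun e : ℕ => (νab e : ℝ) / (p : ℝ) ^ e) atTop (nhds fptAB)) :
    (∀ e r s : ℕ, a ^ r ≤ frobeniusPower p e m → b ^ s ≤ frobeniusPower p e m →
        (a ⊔ b) ^ (r + s) ≤ frobeniusPower p e m) ∧
      (∀ e, 1 ≤ e → νab e ≤ νa e + νb e + 1) ∧ fptAB ≤ fptA + fptB := by
  have hν : ∀ e, 1 ≤ e → νab e ≤ νa e + νb e + 1 := fun e he =>
    Ideal.le_add_add_one_of_isGreatest (hνa e he) (hνb e he) (hνab e he)
  refine ⟨fun _ _ _ => Ideal.sup_pow_add_le_of_pow_le, hν, ?_⟩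
  have hp : (1 : ℝ) < p := by exact_mod_cast (Fact.out : p.Prime).one_lt
  refine le_add_of_tendsto_div_pow hp hAB hA hB (c := 1) ?_
  filter_upwards [eventually_ge_atTop 1] with e he
  exact_mod_cast hν e he

/-- If `a, b ⊆ m` with `m` maximal, `a^r ⊆ m^{[pᵉ]}` and `b^s ⊆ m^{[pᵉ]}` imply
`(a+b)^{r+s} ⊆ m^{[pᵉ]}`; consequently `ν_{a+b}(e) ≤ ν_a(e) + ν_b(e) + 1` for every
`e ≥ 1`, and hence `fpt(a+b) ≤ fpt(a) + fpt(b)`. -/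
theorem fpt_sum_le_add_fpt {R : Type*} [CommRing R] (p : ℕ) [Fact p.Prime]
    [CharP R p] [ExpChar R p] (_ : (frobenius R p).Flat)
    (a b m : Ideal R) (ham : a ≤ m) (hbm : b ≤ m) (hmax : m.IsMaximal)
    (ha : a ≠ ⊥) (hb : b ≠ ⊥) (νa νb νab : ℕ → ℕ)
    (hνa : ∀ e, 1 ≤ e → IsGreatest {i : ℕ | ¬ a ^ i ≤ frobeniusPower p e m} (νa e))
    (hνb : ∀ e, 1 ≤ e → IsGreatest {i : ℕ | ¬ b ^ i ≤ frobeniusPower p e m} (νb e))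
    (hνab : ∀ e, 1 ≤ e →
      IsGreatest {i : ℕ | ¬ (a ⊔ b) ^ i ≤ frobeniusPower p e m} (νab e))
    (fptA fptB fptAB : ℝ)
    (hA : Tendsto (fun e : ℕ => (νa e : ℝ) / (p : ℝ) ^ e) atTop (nhds fptA))
    (hB : Tendsto (fun e : ℕ => (νb e : ℝ) / (p : ℝ) ^ e) atTop (nhds fptB))
    (hAB : Tendsto (fun e : ℕ => (νab e : ℝ) / (p : ℝ) ^ e) atTop (nhds fptAB)) :
    (∀ e r s : ℕ, a ^ r ≤ frobeniusPower p e m → b ^ s ≤ frobeniusPower p e m →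
        (a ⊔ b) ^ (r + s) ≤ frobeniusPower p e m) ∧
      (∀ e, 1 ≤ e → νab e ≤ νa e + νb e + 1) ∧ fptAB ≤ fptA + fptB :=
  fpt_sum_le_add_fpt_general p a b m νa νb νab hνa hνb hνab fptA fptB fptAB hA hB hAB
end

section
/- Let f = x² + y³ in k[x,y] with char(k) = p > 3. The largest r ≤ p−1 such that f^r ∉ (x^p, y^p) is ν(1) = ⌊(p−1)/2⌋ + ⌊(p−1)/3⌋; explicitly, ν(1) = (5/6)(p−1) if p ≡ 1 (mod 3), and ν(1) = (5p−7)/6 if p ≡ 2 (mod 3). -/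
/-!
Expanding, `(x^m + y^n)^r = ∑ₜ C(r,t) x^{mt} y^{n(r-t)}`, and a polynomial lies in the monomial
ideal `(x^p, y^p)` iff every monomial of its support is divisible by `x^p` or `y^p`.
If `r > ⌊(p-1)/m⌋ + ⌊(p-1)/n⌋`, then `mt ≥ p` or `n(r-t) ≥ p` for every `t`. Otherwise
`r = s + u` with `ms < p` and `nu < p`; as `m, n ≥ 2` this forces `r < p`, so `C(r,s) ≠ 0` in
characteristic `p` and `x^{ms} y^{nu}` is a monomial of `(x^m + y^n)^r` outside the ideal.
-/

open MvPolynomial Finset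

theorem Nat.mul_lt_iff_le_sub_one_div {c p x : ℕ} (hc : 0 < c) (hp : 0 < p) :
    c * x < p ↔ x ≤ (p - 1) / c := by
  rw [Nat.le_div_iff_mul_le hc, mul_comm]
  omega

namespace MvPolynomial

variable {σ R : Type*} [CommSemiring R] {a b : σ} {m n : ℕ}

theorem mem_span_X_pow_pair_iff {φ : MvPolynomial σ R} :
    φ ∈ Ideal.span {X a ^ m, X b ^ n} ↔ ∀ d ∈ φ.support, m ≤ d a ∨ n ≤ d b := by
  have hgen : ({X a ^ m, X b ^ n} : Set (MvPolynomial σ R)) =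
      (fun s => monomial s (1 : R)) '' {Finsupp.single a m, Finsupp.single b n} := by
    simp [Set.image_pair, X_pow_eq_monomial]
  simp [hgen, mem_ideal_span_monomial_image, Finsupp.single_le_iff]

theorem X_pow_add_X_pow_pow (a b : σ) (m n r : ℕ) :
    (X a ^ m + X b ^ n : MvPolynomial σ R) ^ r =
      ∑ t ∈ range (r + 1),
        monomial (Finsupp.single a (m * t) + Finsupp.single b (n * (r - t))) (r.choose t : R) := by
  rw [add_pow]
  refine sum_congr rfl fun t _ => ?_
  rw [← pow_mul, ← pow_mul, X_pow_eq_monomial, X_pow_eq_monomial, monomial_mul, mul_one,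
    ← map_natCast (C : R →+* MvPolynomial σ R), mul_comm, C_mul_monomial, mul_one,
    mul_comm m, mul_comm n]

theorem exists_eq_of_mem_support_X_pow_add_X_pow_pow {r : ℕ} {d : σ →₀ ℕ}
    (hd : d ∈ ((X a ^ m + X b ^ n : MvPolynomial σ R) ^ r).support) :
    ∃ t ≤ r, d = Finsupp.single a (m * t) + Finsupp.single b (n * (r - t)) := by
  classical
  rw [X_pow_add_X_pow_pow] at hd
  obtain ⟨t, ht, hdt⟩ := mem_biUnion.mp (support_sum hd)
  exact ⟨t, Nat.lt_succ_iff.mp (mem_range.mp ht), mem_singleton.mp (support_monomial_subset hdt)⟩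

theorem coeff_X_pow_add_X_pow_pow (hab : a ≠ b) (hm : m ≠ 0) (s u : ℕ) :
    coeff (Finsupp.single a (m * s) + Finsupp.single b (n * u))
        ((X a ^ m + X b ^ n : MvPolynomial σ R) ^ (s + u)) = ((s + u).choose s : R) := by
  classical
  rw [X_pow_add_X_pow_pow, coeff_sum, sum_eq_single s]
  · simp
  · intro t _ hts
    rw [coeff_monomial, if_neg]
    intro h
    have hexp := DFunLike.congr_fun h a
    simp [hab.symm, hm] at hexp
    exact hts hexp
  · simp

theorem X_pow_add_X_pow_pow_mem_span_of_lt {p r : ℕ} (hab : a ≠ b) (hm : 0 < m) (hn : 0 < n)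
    (hp : 0 < p) (hr : (p - 1) / m + (p - 1) / n < r) :
    (X a ^ m + X b ^ n : MvPolynomial σ R) ^ r ∈ Ideal.span {X a ^ p, X b ^ p} := by
  rw [mem_span_X_pow_pair_iff]
  intro d hd
  obtain ⟨t, ht, rfl⟩ := exists_eq_of_mem_support_X_pow_add_X_pow_pow hd
  simp only [Finsupp.add_apply, Finsupp.single_eq_same, Finsupp.single_eq_of_ne hab,
    Finsupp.single_eq_of_ne hab.symm, add_zero, zero_add]
  rw [← not_lt, ← not_lt, Nat.mul_lt_iff_le_sub_one_div hm hp,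
    Nat.mul_lt_iff_le_sub_one_div hn hp]
  omega

theorem X_pow_add_X_pow_pow_notMem_span {p r : ℕ} [Fact p.Prime] [CharP R p] (hab : a ≠ b)
    (hm : 2 ≤ m) (hn : 2 ≤ n) (hr : r ≤ (p - 1) / m + (p - 1) / n) :
    (X a ^ m + X b ^ n : MvPolynomial σ R) ^ r ∉ Ideal.span {X a ^ p, X b ^ p} := by
  have hp : p.Prime := Fact.out
  obtain ⟨s, u, hs, hu, rfl⟩ : ∃ s u, s ≤ (p - 1) / m ∧ u ≤ (p - 1) / n ∧ s + u = r := by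
    generalize (p - 1) / m = A at hr ⊢
    generalize (p - 1) / n = B at hr ⊢
    exact ⟨min r A, r - min r A, by omega, by omega, by omega⟩
  have hsu : s + u < p := by
    have := Nat.div_le_div_left (a := p - 1) hm two_pos
    have := Nat.div_le_div_left (a := p - 1) hn two_pos
    have := hp.pos
    omega
  rw [mem_span_X_pow_pair_iff]
  push Not
  refine ⟨Finsupp.single a (m * s) + Finsupp.single b (n * u), mem_support_iff.mpr ?_, ?_⟩
  · rw [coeff_X_pow_add_X_pow_pow hab (by omega), Ne, CharP.cast_eq_zero_iff R p]
    exact (Nat.Prime.coprime_iff_not_dvd hp).mp (hp.coprime_choose_of_lt hsu le_self_add)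
  · simp only [Finsupp.add_apply, Finsupp.single_eq_same, Finsupp.single_eq_of_ne hab,
      Finsupp.single_eq_of_ne hab.symm, add_zero, zero_add]
    rw [Nat.mul_lt_iff_le_sub_one_div (by omega) hp.pos,
      Nat.mul_lt_iff_le_sub_one_div (by omega) hp.pos]
    exact ⟨hs, hu⟩

theorem X_pow_add_X_pow_pow_mem_span_iff {p : ℕ} [Fact p.Prime] [CharP R p] (hab : a ≠ b)
    (hm : 2 ≤ m) (hn : 2 ≤ n) (r : ℕ) :
    (X a ^ m + X b ^ n : MvPolynomial σ R) ^ r ∈ Ideal.span {X a ^ p, X b ^ p} ↔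
      (p - 1) / m + (p - 1) / n < r :=
  ⟨fun h => not_le.mp fun hr => X_pow_add_X_pow_pow_notMem_span hab hm hn hr h,
    X_pow_add_X_pow_pow_mem_span_of_lt hab (by omega) (by omega) (Fact.out : p.Prime).pos⟩

end MvPolynomial

/-- For `f = x² + y³` over a field of characteristic `p > 3`, the largest `r` with
`f^r ∉ (x^p, y^p)` is `ν(1) = ⌊(p−1)/2⌋ + ⌊(p−1)/3⌋`; explicitly `ν(1) = (5/6)(p−1)`
if `p ≡ 1 (mod 3)` and `ν(1) = (5p−7)/6` if `p ≡ 2 (mod 3)`. -/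
theorem nu_one_of_cusp (k : Type*) [Field k] (p : ℕ) [Fact p.Prime] [CharP k p]
    (hp : 3 < p) (f : MvPolynomial (Fin 2) k)
    (hf : f = X 0 ^ 2 + X 1 ^ 3) :
    IsGreatest {r : ℕ | f ^ r ∉ Ideal.span
        {(X 0 : MvPolynomial (Fin 2) k) ^ p, (X 1 : MvPolynomial (Fin 2) k) ^ p}}
      ((p - 1) / 2 + (p - 1) / 3) ∧
      (p % 3 = 1 → 6 * ((p - 1) / 2 + (p - 1) / 3) = 5 * (p - 1)) ∧
      (p % 3 = 2 → 6 * ((p - 1) / 2 + (p - 1) / 3) = 5 * p - 7) := by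
  have hodd : p % 2 = 1 := Nat.odd_iff.mp ((Fact.out : p.Prime).odd_of_ne_two (by omega))
  have hset : {r : ℕ | f ^ r ∉ Ideal.span
      {(X 0 : MvPolynomial (Fin 2) k) ^ p, (X 1 : MvPolynomial (Fin 2) k) ^ p}} =
      Set.Iic ((p - 1) / 2 + (p - 1) / 3) := by
    ext r
    simp [hf, X_pow_add_X_pow_pow_mem_span_iff Fin.zero_ne_one le_rfl (by norm_num : 2 ≤ 3)]
  exact ⟨hset ▸ isGreatest_Iic, by omega, by omega⟩
end

section
/- Let k be a perfect field of characteristic p and b ⊆ k[x₁,…,xₙ] an ideal generated in degrees ≤ d. Then b^{[1/p^e]} is generated in degrees ≤ d/p^e. More precisely, if the monomials w₁,…,w_N of degree ≤ p^e − 1 in each variable form a basis of R = k[x₁,…,xₙ] over R^{p^e} = k[x₁^{p^e},…,xₙ^{p^e}], and if b = (h₁,…,h_m) with h_i = Σ_j u_{i,j}^{p^e} w_j, then b^{[1/p^e]} = (u_{i,j} : i ≤ m, j ≤ N). -/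
/-!
Every exponent vector is uniquely `p^e • t + b` with all entries of `b` below `p^e`, so
`k[x]` is free over its subring of `p^e`-th powers on the monomials `X^b`, and since `k` is
perfect the coordinate of `f` along `X^b` is the polynomial `D_b f` whose coefficient at `t`
is the `p^e`-th root of the coefficient of `f` at `p^e • t + b`. These coordinates are
additive and satisfy `D_b (f * g^{p^e}) = D_b f * g`, so they map `J^{[p^e]}` into `J`; as
`u_{i,b} = D_b h_i`, this gives minimality. The degree bound holds monomial by monomial.
-/

open MvPolynomial

lemma pow_mem_frobeniusPower {R : Type*} [CommRing R] (p e : ℕ) {I : Ideal R} {x : R}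
    (hx : x ∈ I) : x ^ p ^ e ∈ frobeniusPower p e I :=
  Ideal.subset_span ⟨x, hx, rfl⟩

noncomputable def exponentDivModEquiv (σ : Type*) [Finite σ] {q : ℕ} (hq : 0 < q) :
    (σ → Fin q) × (σ →₀ ℕ) ≃ (σ →₀ ℕ) :=
  haveI : NeZero q := ⟨hq.ne'⟩
  ((Equiv.refl _).prodCongr Finsupp.equivFunOnFinite).trans <|
    (Equiv.prodComm _ _).trans <| (Equiv.arrowProdEquivProdArrow _ _ _).symm.trans <|
      (Equiv.piCongrRight fun _ => (Nat.divModEquiv q).symm).trans Finsupp.equivFunOnFinite.symm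

lemma exponentDivModEquiv_apply {σ : Type*} [Finite σ] {q : ℕ} (hq : 0 < q)
    (b : σ → Fin q) (t : σ →₀ ℕ) :
    exponentDivModEquiv σ hq (b, t) =
      q • t + Finsupp.equivFunOnFinite.symm (fun j => (b j : ℕ)) := by
  ext j
  simp [exponentDivModEquiv, mul_comm]

section IterateFrobenius

variable {R : Type*} [CommSemiring R] (p : ℕ) [ExpChar R p] [PerfectRing R p] (e : ℕ)

@[simp]
lemma iterateFrobeniusEquiv_symm_pow (x : R) :
    (iterateFrobeniusEquiv R p e).symm (x ^ p ^ e) = x :=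
  (iterateFrobeniusEquiv R p e).symm_apply_apply x

@[simp]
lemma iterateFrobeniusEquiv_symm_apply_pow (x : R) :
    (iterateFrobeniusEquiv R p e).symm x ^ p ^ e = x :=
  (iterateFrobeniusEquiv R p e).apply_symm_apply x

end IterateFrobenius

namespace MvPolynomial

section

variable {σ R : Type*} [Fintype σ] [CommSemiring R] (p : ℕ) [ExpChar R p] (e : ℕ)

lemma prod_X_pow_eq_monomial_equivFunOnFinite (b : σ → ℕ) :
    ∏ j, (X j : MvPolynomial σ R) ^ b j = monomial (Finsupp.equivFunOnFinite.symm b) 1 := by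
  rw [monomial_eq, C_1, one_mul, Finsupp.prod_fintype _ _ fun _ => pow_zero _]
  rfl

lemma pow_mul_prod_X_pow_eq_sum_monomial (c : MvPolynomial σ R) (b : σ → Fin (p ^ e)) :
    c ^ p ^ e * ∏ j, (X j : MvPolynomial σ R) ^ (b j : ℕ) =
      ∑ v ∈ c.support,
        monomial (exponentDivModEquiv σ (expChar_pow_pos R p e) (b, v)) (coeff v c ^ p ^ e) := by
  conv_lhs => rw [← support_sum_monomial_coeff c, ← iterateFrobenius_def, map_sum]
  simp [iterateFrobenius_def, prod_X_pow_eq_monomial_equivFunOnFinite, Finset.sum_mul,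
    monomial_pow, monomial_mul, exponentDivModEquiv_apply]

lemma coeff_pow_mul_prod_X_pow (c : MvPolynomial σ R) (b b' : σ → Fin (p ^ e))
    (t : σ →₀ ℕ) :
    coeff (exponentDivModEquiv σ (expChar_pow_pos R p e) (b', t))
        (c ^ p ^ e * ∏ j, (X j : MvPolynomial σ R) ^ (b j : ℕ)) =
      if b = b' then coeff t c ^ p ^ e else 0 := by
  classical
  rw [pow_mul_prod_X_pow_eq_sum_monomial, coeff_sum]
  simp only [coeff_monomial, (exponentDivModEquiv σ _).injective.eq_iff, Prod.mk.injEq]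
  split_ifs with hb
  · simp only [hb, true_and, Finset.sum_ite_eq', mem_support_iff, ite_not]
    split_ifs with h <;> simp [h, zero_pow (expChar_pow_pos R p e).ne']
  · simp [hb]

variable [PerfectRing R p]

/-- The coordinate `D_b f` of `f` along `X^b` over the subring of `p^e`-th powers. -/
noncomputable def frobeniusCoord (b : σ → Fin (p ^ e)) :
    MvPolynomial σ R →+ MvPolynomial σ R where
  toFun f := AddMonoidAlgebra.ofCoeff <|
    Finsupp.mapRange (iterateFrobeniusEquiv R p e).symm (map_zero _) <|
      Finsupp.comapDomain (fun t => exponentDivModEquiv σ (expChar_pow_pos R p e) (b, t))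
        (AddMonoidAlgebra.coeff f)
        ((exponentDivModEquiv σ _).injective.comp (Prod.mk_right_injective b)).injOn
  map_zero' := by ext; simp [coeff]
  map_add' f g := by ext; simp [coeff]

lemma coeff_frobeniusCoord (b : σ → Fin (p ^ e)) (f : MvPolynomial σ R) (t : σ →₀ ℕ) :
    coeff t (frobeniusCoord p e b f) = (iterateFrobeniusEquiv R p e).symm
      (coeff (exponentDivModEquiv σ (expChar_pow_pos R p e) (b, t)) f) :=
  rfl

lemma frobeniusCoord_pow_mul_prod_X_pow (c : MvPolynomial σ R)
    (b b' : σ → Fin (p ^ e)) :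
    frobeniusCoord p e b' (c ^ p ^ e * ∏ j, (X j : MvPolynomial σ R) ^ (b j : ℕ)) =
      if b = b' then c else 0 := by
  ext t
  rw [coeff_frobeniusCoord, coeff_pow_mul_prod_X_pow]
  split_ifs <;> simp

lemma totalDegree_frobeniusCoord_mul_le (b : σ → Fin (p ^ e)) (f : MvPolynomial σ R) :
    (frobeniusCoord p e b f).totalDegree * p ^ e ≤ f.totalDegree := by
  rw [← Nat.le_div_iff_mul_le (expChar_pow_pos R p e)]
  refine Finset.sup_le fun t ht => ?_
  rw [Nat.le_div_iff_mul_le (expChar_pow_pos R p e)]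
  have hne : coeff (exponentDivModEquiv σ (expChar_pow_pos R p e) (b, t)) f ≠ 0 := by
    simpa [coeff_frobeniusCoord] using ht
  refine le_trans ?_ (le_totalDegree (mem_support_iff.mpr hne))
  change t.degree * p ^ e ≤ (exponentDivModEquiv σ _ (b, t)).degree
  rw [exponentDivModEquiv_apply, map_add, map_nsmul, smul_eq_mul, mul_comm]
  exact Nat.le_add_right _ _

variable [DecidableEq σ]

lemma frobeniusCoord_sum_pow_mul_prod_X_pow
    (u : (σ → Fin (p ^ e)) → MvPolynomial σ R) (b' : σ → Fin (p ^ e)) :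
    frobeniusCoord p e b' (∑ b, u b ^ p ^ e * ∏ j, (X j : MvPolynomial σ R) ^ (b j : ℕ)) =
      u b' := by
  simp [frobeniusCoord_pow_mul_prod_X_pow]

lemma sum_frobeniusCoord_pow_mul_prod_X_pow (f : MvPolynomial σ R) :
    ∑ b : σ → Fin (p ^ e),
      frobeniusCoord p e b f ^ p ^ e * ∏ j, (X j : MvPolynomial σ R) ^ (b j : ℕ) = f := by
  ext s
  obtain ⟨⟨b', t⟩, rfl⟩ := (exponentDivModEquiv σ (expChar_pow_pos R p e)).surjective s
  simp [coeff_sum, coeff_pow_mul_prod_X_pow, coeff_frobeniusCoord]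

lemma frobeniusCoord_mul_pow (b : σ → Fin (p ^ e)) (f g : MvPolynomial σ R) :
    frobeniusCoord p e b (f * g ^ p ^ e) = frobeniusCoord p e b f * g := by
  conv_lhs => rw [← sum_frobeniusCoord_pow_mul_prod_X_pow p e f, Finset.sum_mul]
  have regroup : ∀ b' : σ → Fin (p ^ e),
      frobeniusCoord p e b' f ^ p ^ e * (∏ j, (X j : MvPolynomial σ R) ^ (b' j : ℕ)) *
          g ^ p ^ e =
        (frobeniusCoord p e b' f * g) ^ p ^ e * ∏ j, (X j : MvPolynomial σ R) ^ (b' j : ℕ) :=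
    fun b' => by ring
  simp only [regroup, frobeniusCoord_sum_pow_mul_prod_X_pow]

end

lemma frobeniusCoord_mem_of_mem_frobeniusPower {σ R : Type*} [Fintype σ] [DecidableEq σ]
    [CommRing R] (p : ℕ) [ExpChar R p] [PerfectRing R p] (e : ℕ)
    {J : Ideal (MvPolynomial σ R)} {f : MvPolynomial σ R} (hf : f ∈ frobeniusPower p e J)
    (b : σ → Fin (p ^ e)) :
    frobeniusCoord p e b f ∈ J := by
  obtain ⟨n, r, g, rfl⟩ := Submodule.mem_span_set'.mp hf
  rw [map_sum]
  refine J.sum_mem fun i _ => ?_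
  obtain ⟨x, hx, hgx⟩ := (g i).2
  rw [smul_eq_mul, ← hgx, frobeniusCoord_mul_pow]
  exact J.mul_mem_left _ hx

end MvPolynomial

theorem frobenius_root_of_polynomial_ideal_general (k : Type*) [Field k] [PerfectField k]
    (p : ℕ) [Fact p.Prime] [CharP k p] (n : ℕ) (e : ℕ)
    (m : ℕ) (h : Fin m → MvPolynomial (Fin n) k)
    (u : Fin m → (Fin n → Fin (p ^ e)) → MvPolynomial (Fin n) k)
    (hdecomp : ∀ i, h i = ∑ b : Fin n → Fin (p ^ e),
      u i b ^ p ^ e * ∏ j : Fin n, (X j : MvPolynomial (Fin n) k) ^ (b j : ℕ)) :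
    IsLeast {J : Ideal (MvPolynomial (Fin n) k) |
        Ideal.span (Set.range h) ≤ frobeniusPower p e J}
      (Ideal.span (Set.range fun x : Fin m × (Fin n → Fin (p ^ e)) => u x.1 x.2)) ∧
      ∀ d : ℕ, (∀ i, (h i).totalDegree ≤ d) →
        ∀ i b, (u i b).totalDegree * p ^ e ≤ d := by
  have hu : ∀ i b, u i b = frobeniusCoord p e b (h i) := fun i b => by
    rw [hdecomp i, frobeniusCoord_sum_pow_mul_prod_X_pow]
  refine ⟨⟨Ideal.span_le.mpr ?_, fun J hJ => Ideal.span_le.mpr ?_⟩, fun d hd i b => ?_⟩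
  · rintro _ ⟨i, rfl⟩
    rw [SetLike.mem_coe, hdecomp i]
    exact Ideal.sum_mem _ fun b _ =>
      Ideal.mul_mem_right _ _ (pow_mem_frobeniusPower p e (Ideal.subset_span ⟨(i, b), rfl⟩))
  · rintro _ ⟨⟨i, b⟩, rfl⟩
    show u i b ∈ J
    rw [hu]
    exact frobeniusCoord_mem_of_mem_frobeniusPower p e (hJ (Ideal.subset_span ⟨i, rfl⟩)) b
  · rw [hu]
    exact (totalDegree_frobeniusCoord_mul_le p e b (h i)).trans (hd i)

/-- Over a perfect field `k` of characteristic `p`, in `R = k[x₁,…,xₙ]`, write each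
generator `hᵢ` of an ideal `b` as `hᵢ = Σ_w u_{i,w}^{pᵉ} · w`, where `w` ranges over the
monomials with exponents `< pᵉ` in each variable (an `R^{pᵉ}`-basis of `R`). Then
`b^{[1/pᵉ]}`, the smallest ideal `J` with `b ⊆ J^{[pᵉ]}`, equals the ideal generated by
the `u_{i,w}`; moreover if each `hᵢ` has degree `≤ d`, then each `u_{i,w}` has degree
`≤ d/pᵉ`. -/
theorem frobenius_root_of_polynomial_ideal (k : Type*) [Field k] [PerfectField k]
    (p : ℕ) [Fact p.Prime] [CharP k p] (n : ℕ) (e : ℕ) (he : 1 ≤ e)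
    (m : ℕ) (h : Fin m → MvPolynomial (Fin n) k)
    (u : Fin m → (Fin n → Fin (p ^ e)) → MvPolynomial (Fin n) k)
    (hdecomp : ∀ i, h i = ∑ b : Fin n → Fin (p ^ e),
      u i b ^ p ^ e * ∏ j : Fin n, (X j : MvPolynomial (Fin n) k) ^ (b j : ℕ)) :
    IsLeast {J : Ideal (MvPolynomial (Fin n) k) |
        Ideal.span (Set.range h) ≤ frobeniusPower p e J}
      (Ideal.span (Set.range fun x : Fin m × (Fin n → Fin (p ^ e)) => u x.1 x.2)) ∧
      ∀ d : ℕ, (∀ i, (h i).totalDegree ≤ d) →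
        ∀ i b, (u i b).totalDegree * p ^ e ≤ d :=
  frobenius_root_of_polynomial_ideal_general k p n e m h u hdecomp
end
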